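/- arXiv:1503.08782 — 3 statements merged into one kernel-verified Lean document; each statement's English description precedes it below -/
import Mathlib

section
/- There exists a finite set of 8 points in ℝ² such that every closed square of side length L (in the ℓ∞ metric) contains at most 4 of the points, yet the set cannot be partitioned into 4 pairwise disjoint subsets each of which contains at most one point of every square of side length L. In particular, the two-dimensional analogue of one-dimensional Rayleigh regularity does not imply decomposability into separated subsets. -/
set_option maxRecDepth 10000

/-- The number of points of a finite set `P ⊆ ℝ²` lying in the closed axis-aligned
square `[a, a+L] × [b, b+L]`. -/
noncomputable def squareCount (P : Finset (ℝ × ℝ)) (L a b : ℝ) : ℕ :=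
  (P.filter (fun p => p.1 ∈ Set.Icc a (a + L) ∧ p.2 ∈ Set.Icc b (b + L))).card

/-- Integer coordinates of our 8 points: a 5-cycle (vertices 0–4), two hubs (5, 6)
adjacent to everything, and a far-away isolated point (7). -/
def ptsZ : Fin 8 → ℤ × ℤ :=
  ![(-18, 0), (-10, 19), (10, 19), (18, 0), (0, -19), (0, 0), (1, 1), (2000, 2000)]

/-- Two indices are adjacent if the corresponding points fit in a common square of side 20. -/
def adjZ (i j : Fin 8) : Prop :=
  |(ptsZ i).1 - (ptsZ j).1| ≤ 20 ∧ |(ptsZ i).2 - (ptsZ j).2| ≤ 20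

instance : DecidableRel adjZ := fun i j => by unfold adjZ; infer_instance

lemma ptsZ_inj : Function.Injective ptsZ := by decide

lemma clique_bound : ∀ T : Finset (Fin 8), (∀ i ∈ T, ∀ j ∈ T, adjZ i j) → T.card ≤ 4 := by
  decide

lemma two3 : ∀ a b u v w : Fin 4, a ≠ b → u ≠ a → u ≠ b → v ≠ a → v ≠ b →
    w ≠ a → w ≠ b → u ≠ v → v ≠ w → u = w := by decide

/-- The points as elements of `ℝ²`. -/
noncomputable def pts (i : Fin 8) : ℝ × ℝ := (((ptsZ i).1 : ℝ), ((ptsZ i).2 : ℝ))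

lemma pts_inj : Function.Injective pts := by
  intro i j h
  apply ptsZ_inj
  have h1 : ((ptsZ i).1 : ℝ) = ((ptsZ j).1 : ℝ) := congrArg Prod.fst h
  have h2 : ((ptsZ i).2 : ℝ) = ((ptsZ j).2 : ℝ) := congrArg Prod.snd h
  exact Prod.ext (by exact_mod_cast h1) (by exact_mod_cast h2)

lemma adjZ_real {i j : Fin 8} (h : adjZ i j) :
    |(pts i).1 - (pts j).1| ≤ 20 ∧ |(pts i).2 - (pts j).2| ≤ 20 := by
  obtain ⟨h1, h2⟩ := h
  constructor
  · show |((ptsZ i).1 : ℝ) - ((ptsZ j).1 : ℝ)| ≤ 20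
    exact_mod_cast h1
  · show |((ptsZ i).2 : ℝ) - ((ptsZ j).2 : ℝ)| ≤ 20
    exact_mod_cast h2

lemma adjZ_of_real {i j : Fin 8}
    (h1 : |(pts i).1 - (pts j).1| ≤ 20) (h2 : |(pts i).2 - (pts j).2| ≤ 20) : adjZ i j := by
  have h1' : |((ptsZ i).1 : ℝ) - ((ptsZ j).1 : ℝ)| ≤ 20 := h1
  have h2' : |((ptsZ i).2 : ℝ) - ((ptsZ j).2 : ℝ)| ≤ 20 := h2
  exact ⟨by exact_mod_cast h1', by exact_mod_cast h2'⟩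

/-- There is a set of 8 points in `ℝ²` such that every closed square of side `L`
contains at most 4 of the points, yet the set cannot be partitioned into 4 pairwise
disjoint subsets each containing at most one point of every square of side `L`. -/
theorem stmt3 :
    ∃ (P : Finset (ℝ × ℝ)) (L : ℝ), 0 < L ∧ P.card = 8 ∧
      (∀ a b : ℝ, squareCount P L a b ≤ 4) ∧
      ¬ ∃ Q : Fin 4 → Finset (ℝ × ℝ),
          (∀ i, Q i ⊆ P) ∧
          (∀ p ∈ P, ∃! i, p ∈ Q i) ∧
          (∀ i, ∀ a b : ℝ, squareCount (Q i) L a b ≤ 1) := by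
  classical
  refine ⟨Finset.univ.image pts, 20, by norm_num, ?_, ?_, ?_⟩
  · rw [Finset.card_image_of_injective _ pts_inj]
    simp
  · -- every square of side 20 contains at most 4 points
    intro a b
    unfold squareCount
    rw [Finset.filter_image]
    rw [Finset.card_image_of_injective _ pts_inj]
    apply clique_bound
    intro i hi j hj
    simp only [Finset.mem_filter, Set.mem_Icc] at hi hj
    apply adjZ_of_real
    · rw [abs_sub_le_iff]
      constructor <;> linarith [hi.2.1.1, hi.2.1.2, hj.2.1.1, hj.2.1.2]
    · rw [abs_sub_le_iff]
      constructor <;> linarith [hi.2.2.1, hi.2.2.2, hj.2.2.1, hj.2.2.2]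
  · -- no partition into 4 separated parts
    rintro ⟨Q, hQP, huniq, hQ1⟩
    have hmem : ∀ k : Fin 8, pts k ∈ Finset.univ.image pts := fun k =>
      Finset.mem_image_of_mem pts (Finset.mem_univ k)
    choose c hcol using fun k : Fin 8 => (huniq (pts k) (hmem k)).exists
    -- adjacent distinct points get different colors
    have proper : ∀ k l : Fin 8, k ≠ l → adjZ k l → c k ≠ c l := by
      intro k l hkl hadj hceq
      obtain ⟨hx, hy⟩ := adjZ_real hadj
      set i := c k with hi
      have hk' : pts k ∈ Q i := hcol k
      have hl' : pts l ∈ Q i := hceq ▸ hcol l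
      have hlt : 1 < squareCount (Q i) 20 (min (pts k).1 (pts l).1) (min (pts k).2 (pts l).2) := by
        rw [squareCount, Finset.one_lt_card_iff]
        rw [abs_sub_le_iff] at hx hy
        refine ⟨pts k, pts l, ?_, ?_, fun h => hkl (pts_inj h)⟩
        · simp only [Finset.mem_filter, Set.mem_Icc]
          exact ⟨hk', ⟨min_le_left _ _, by rcases min_cases (pts k).1 (pts l).1 with ⟨h,_⟩|⟨h,_⟩ <;>
              rw [h] <;> linarith [hx.1, hx.2]⟩,
            ⟨min_le_left _ _, by rcases min_cases (pts k).2 (pts l).2 with ⟨h,_⟩|⟨h,_⟩ <;>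
              rw [h] <;> linarith [hy.1, hy.2]⟩⟩
        · simp only [Finset.mem_filter, Set.mem_Icc]
          exact ⟨hl', ⟨min_le_right _ _, by rcases min_cases (pts k).1 (pts l).1 with ⟨h,_⟩|⟨h,_⟩ <;>
              rw [h] <;> linarith [hx.1, hx.2]⟩,
            ⟨min_le_right _ _, by rcases min_cases (pts k).2 (pts l).2 with ⟨h,_⟩|⟨h,_⟩ <;>
              rw [h] <;> linarith [hy.1, hy.2]⟩⟩
      exact absurd (hQ1 i _ _) (not_le.mpr hlt)
    -- now derive the coloring contradiction: K₂ ⋈ C₅ is not 4-colorable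
    have h56 : c 5 ≠ c 6 := proper 5 6 (by decide) (by decide)
    have h05 : c 0 ≠ c 5 := proper 0 5 (by decide) (by decide)
    have h06 : c 0 ≠ c 6 := proper 0 6 (by decide) (by decide)
    have h15 : c 1 ≠ c 5 := proper 1 5 (by decide) (by decide)
    have h16 : c 1 ≠ c 6 := proper 1 6 (by decide) (by decide)
    have h25 : c 2 ≠ c 5 := proper 2 5 (by decide) (by decide)
    have h26 : c 2 ≠ c 6 := proper 2 6 (by decide) (by decide)
    have h35 : c 3 ≠ c 5 := proper 3 5 (by decide) (by decide)
    have h36 : c 3 ≠ c 6 := proper 3 6 (by decide) (by decide)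
    have h45 : c 4 ≠ c 5 := proper 4 5 (by decide) (by decide)
    have h46 : c 4 ≠ c 6 := proper 4 6 (by decide) (by decide)
    have h01 : c 0 ≠ c 1 := proper 0 1 (by decide) (by decide)
    have h12 : c 1 ≠ c 2 := proper 1 2 (by decide) (by decide)
    have h23 : c 2 ≠ c 3 := proper 2 3 (by decide) (by decide)
    have h34 : c 3 ≠ c 4 := proper 3 4 (by decide) (by decide)
    have h40 : c 4 ≠ c 0 := proper 4 0 (by decide) (by decide)
    have e02 : c 0 = c 2 := two3 (c 5) (c 6) (c 0) (c 1) (c 2) h56 h05 h06 h15 h16 h25 h26 h01 h12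
    have e24 : c 2 = c 4 := two3 (c 5) (c 6) (c 2) (c 3) (c 4) h56 h25 h26 h35 h36 h45 h46 h23 h34
    exact h40 (e24.symm.trans e02.symm)
end

section
/- Let T ⊆ {k/N : k ∈ ℤ} be a set of points satisfying the separation condition |t_i − t_j| ≥ νσ for all distinct t_i, t_j ∈ T, for some ν, σ > 0. Then for every k ∈ ℤ, the sum over k_m ∈ T (where t_m = k_m/N) of 1/(1 + ((k − k_m)/(Nσ))²) is strictly less than 2(1 + π²/(6ν²)). -/
/-!
On a `δ`-separated set `S`, the cell index `t ↦ ⌊(t - c) / δ⌋ ∈ ℤ` is injective, and a point in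
cell `n` lies at distance at least `min |n| |n + 1| · δ` from `c`. Every lattice distance `m δ`
is thus charged to at most two cells (`n = m` and `n = -m - 1`), so for an even `f` that
decreases on `[0, ∞)` the sum of `f (c - t)` over `S` is at most `2 ∑ₘ f (m δ)`. For the
Lorentzian with `δ = νσ` this lattice sum is `1 + ∑_{m ≥ 1} 1 / (1 + (m ν)²)`, which is
strictly below `1 + ∑_{m ≥ 1} 1 / (m ν)² = 1 + π² / (6 ν²)`.
-/

open Real

lemma hasSum_one_div_nat_add_one_sq :
    HasSum (fun n : ℕ => 1 / ((n : ℝ) + 1) ^ 2) (π ^ 2 / 6) := by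
  simpa using (hasSum_nat_add_iff' 1).mpr hasSum_zeta_two

lemma hasSum_one_div_nat_add_one_mul_sq (ν : ℝ) :
    HasSum (fun m : ℕ => 1 / (((m : ℝ) + 1) * ν) ^ 2) (π ^ 2 / (6 * ν ^ 2)) := by
  simpa only [mul_pow, div_div] using hasSum_one_div_nat_add_one_sq.div_const (ν ^ 2)

lemma one_div_one_add_sq_lt_one_div_sq {x : ℝ} (hx : x ≠ 0) : 1 / (1 + x ^ 2) < 1 / x ^ 2 :=
  one_div_lt_one_div_of_lt (by positivity) (by linarith)

section LorentzianLatticeSum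

variable {ν : ℝ} (hν : ν ≠ 0)
include hν

lemma one_div_one_add_sq_nat_succ_mul_lt (m : ℕ) :
    1 / (1 + (((m + 1 : ℕ) : ℝ) * ν) ^ 2) < 1 / (((m : ℝ) + 1) * ν) ^ 2 := by
  push_cast
  exact one_div_one_add_sq_lt_one_div_sq (mul_ne_zero (by positivity) hν)

lemma summable_one_div_one_add_sq_nat_mul :
    Summable fun m : ℕ => 1 / (1 + ((m : ℝ) * ν) ^ 2) :=
  (summable_nat_add_iff 1).mp <|
    (hasSum_one_div_nat_add_one_mul_sq ν).summable.of_nonneg_of_le (fun _ => by positivity)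
      fun m => (one_div_one_add_sq_nat_succ_mul_lt hν m).le

lemma tsum_one_div_one_add_sq_nat_mul_lt :
    ∑' m : ℕ, 1 / (1 + ((m : ℝ) * ν) ^ 2) < 1 + π ^ 2 / (6 * ν ^ 2) := by
  have hsum := summable_one_div_one_add_sq_nat_mul hν
  have htail := hasSum_lt (fun m => (one_div_one_add_sq_nat_succ_mul_lt hν m).le)
    (one_div_one_add_sq_nat_succ_mul_lt hν 0) ((summable_nat_add_iff 1).mpr hsum).hasSum
    (hasSum_one_div_nat_add_one_mul_sq ν)
  rw [hsum.tsum_eq_zero_add]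
  norm_num at htail ⊢
  linarith

end LorentzianLatticeSum

lemma min_abs_floor_le_abs (x : ℝ) : min |(⌊x⌋ : ℝ)| |(⌊x⌋ : ℝ) + 1| ≤ |x| := by
  rcases le_or_gt 0 x with hx | hx
  · have h0 : (0 : ℝ) ≤ ⌊x⌋ := by exact_mod_cast Int.floor_nonneg.mpr hx
    exact min_le_of_left_le (by rw [abs_of_nonneg h0, abs_of_nonneg hx]; exact Int.floor_le x)
  · have h0 : (⌊x⌋ : ℝ) + 1 ≤ 0 := by
      have : ⌊x⌋ < 0 := Int.floor_lt.mpr (by exact_mod_cast hx)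
      exact_mod_cast this
    exact min_le_of_right_le (by
      rw [abs_of_nonpos h0, abs_of_neg hx]; linarith [Int.lt_floor_add_one x])

lemma Set.Pairwise.injOn_floor_div {S : Set ℝ} {δ : ℝ} (hδ : 0 < δ)
    (hS : S.Pairwise fun s t => δ ≤ |s - t|) (c : ℝ) :
    S.InjOn fun t => ⌊(t - c) / δ⌋ := by
  intro s hs t ht hst
  by_contra hne
  have hfloor := Int.abs_sub_lt_one_of_floor_eq_floor hst
  rw [← sub_div, sub_sub_sub_cancel_right, abs_div, abs_of_pos hδ, div_lt_one hδ] at hfloor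
  exact (hS hs ht hne).not_gt hfloor

lemma Function.Even.apply_abs {f : ℝ → ℝ} (hf : f.Even) (x : ℝ) : f |x| = f x := by
  rcases abs_choice x with h | h <;> rw [h]
  exact hf x

theorem tsum_sub_le_two_mul_tsum_of_separated {f : ℝ → ℝ} (hf₀ : ∀ x, 0 ≤ f x)
    (hf_even : f.Even) (hf_anti : AntitoneOn f (Set.Ici 0)) {δ : ℝ} (hδ : 0 < δ) {S : Set ℝ}
    (hS : S.Pairwise fun s t => δ ≤ |s - t|) (c : ℝ)
    (hsum : Summable fun m : ℕ => f (m * δ)) :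
    ∑' t : S, f (c - t) ≤ 2 * ∑' m : ℕ, f (m * δ) := by
  set g : ℤ → ℝ := fun n => f (min |(n : ℝ)| |(n : ℝ) + 1| * δ)
  have hg : HasSum g (∑' m : ℕ, f (m * δ) + ∑' m : ℕ, f (m * δ)) := by
    refine HasSum.of_nat_of_neg_add_one ?_ ?_ <;> convert hsum.hasSum using 3 with m
    · push_cast
      rw [abs_of_nonneg (by positivity), abs_of_nonneg (by positivity), min_eq_left (by linarith)]
    · push_cast
      rw [show -((m : ℝ) + 1) + 1 = -m by ring, abs_neg, abs_neg, abs_of_nonneg (by positivity),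
        abs_of_nonneg (by positivity), min_eq_right (by linarith)]
  set φ : S → ℤ := fun t => ⌊(t - c) / δ⌋
  have hφ : Function.Injective φ := (hS.injOn_floor_div hδ c).injective
  have hle : ∀ t : S, f (c - t) ≤ g (φ t) := fun t => by
    rw [← hf_even.apply_abs]
    refine hf_anti (by simp only [Set.mem_Ici]; positivity) (Set.mem_Ici.mpr (abs_nonneg _)) ?_
    calc min |(φ t : ℝ)| |(φ t : ℝ) + 1| * δ ≤ |(t - c) / δ| * δ := by
          gcongr; exact min_abs_floor_le_abs _
      _ = |c - t| := by rw [abs_div, abs_of_pos hδ, div_mul_cancel₀ _ hδ.ne', abs_sub_comm]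
  have hsumS : Summable fun t : S => f (c - t) :=
    (hg.summable.comp_injective hφ).of_nonneg_of_le (fun _ => hf₀ _) hle
  calc ∑' t : S, f (c - t) ≤ ∑' n, g n :=
        hsumS.tsum_le_tsum_of_inj φ hφ (fun _ _ => hf₀ _) hle hg.summable
    _ = 2 * ∑' m : ℕ, f (m * δ) := by rw [hg.tsum_eq]; ring

theorem stmt6_general (N : ℕ) (σ ν : ℝ) (hσ : 0 < σ) (hν : 0 < ν)
    (T : Set ℝ)
    (hsep : ∀ s ∈ T, ∀ t ∈ T, s ≠ t → ν * σ ≤ |s - t|)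
    (k : ℤ) :
    (∑' t : T, 1 / (1 + (((k : ℝ) / N - (t : ℝ)) / σ) ^ 2)) <
      2 * (1 + π ^ 2 / (6 * ν ^ 2)) := by
  set f : ℝ → ℝ := fun x => 1 / (1 + (x / σ) ^ 2)
  have hf_even : f.Even := fun x => by simp only [f, neg_div, neg_sq]
  have hf_anti : AntitoneOn f (Set.Ici 0) := fun x hx y _ hxy => by
    have : 0 ≤ x := hx
    simp only [f]
    gcongr
  have hf_lattice :
      (fun m : ℕ => f (m * (ν * σ))) = fun m : ℕ => 1 / (1 + ((m : ℝ) * ν) ^ 2) := by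
    ext m
    simp only [f]
    field_simp
  have hsum := summable_one_div_one_add_sq_nat_mul hν.ne'
  have hle := tsum_sub_le_two_mul_tsum_of_separated (fun _ => by positivity) hf_even hf_anti
    (mul_pos hν hσ) (fun s hs t ht => hsep s hs t ht) ((k : ℝ) / N) (hf_lattice ▸ hsum)
  rw [hf_lattice] at hle
  linarith [tsum_one_div_one_add_sq_nat_mul_lt hν.ne']

/-- For a set `T` of lattice points `{k/N}` pairwise separated by at least `νσ`, and
any `k ∈ ℤ`, `∑_{t_m ∈ T} 1/(1 + ((k − k_m)/(Nσ))²) < 2(1 + π²/(6ν²))`, where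
`t_m = k_m / N` so that `(k - k_m)/(Nσ) = (k/N - t_m)/σ`. -/
theorem stmt6 (N : ℕ) (hN : 0 < N) (σ ν : ℝ) (hσ : 0 < σ) (hν : 0 < ν)
    (T : Set ℝ) (hlat : T ⊆ {t : ℝ | ∃ k : ℤ, t = (k : ℝ) / N})
    (hsep : ∀ s ∈ T, ∀ t ∈ T, s ≠ t → ν * σ ≤ |s - t|)
    (k : ℤ) :
    (∑' t : T, 1 / (1 + (((k : ℝ) / N - (t : ℝ)) / σ) ^ 2)) <
      2 * (1 + π ^ 2 / (6 * ν ^ 2)) :=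
  stmt6_general N σ ν hσ hν T hsep k
end

section
/- Let g be a non-negative admissible kernel with global constants C_ℓ, and let T ⊆ {k/N : k ∈ ℤ} satisfy the separation |t_i − t_j| ≥ νσ for distinct elements. Then for ℓ = 0, 1 and every k ∈ ℤ, |∑_{k_m ∈ T} g^(ℓ)[k − k_m]| ≤ 2 C_ℓ (1 + π²/(6ν²)), where g^(ℓ)[j] := g^(ℓ)(j/(Nσ)). -/
open Real

/-- `g : ℝ → ℝ` is a non-negative admissible kernel with global constants `C ℓ`
and local constants `ε, β`. -/
def NonnegAdmissibleKernel (g : ℝ → ℝ) (C : ℕ → ℝ) (ε β : ℝ) : Prop :=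
  (∀ t, 0 ≤ g t) ∧ ContDiff ℝ 3 g ∧ (∀ t, g (-t) = g t) ∧
  (∀ ℓ ≤ 3, 0 < C ℓ) ∧
  (∀ ℓ ≤ 3, ∀ t : ℝ, |iteratedDeriv ℓ g t| ≤ C ℓ / (1 + t ^ 2)) ∧
  0 < ε ∧ 0 < β ∧
  (∀ t : ℝ, ε < |t| → g t < g ε) ∧
  (∀ t : ℝ, |t| ≤ ε → iteratedDeriv 2 g t ≤ -β)

/-- key arithmetic estimate -/
lemma key_est (ν x : ℝ) (hν : 0 < ν) (m : ℕ) (hm : 1 ≤ m) (h : (m : ℝ) * ν ≤ |x|) :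
    1 / (1 + x ^ 2) ≤ ν⁻¹ ^ 2 * (1 / (m : ℝ) ^ 2) := by
  have hm' : (0 : ℝ) < m := by exact_mod_cast hm
  have h1 : (0 : ℝ) < ((m : ℝ) * ν) ^ 2 := by positivity
  have h2 : ((m : ℝ) * ν) ^ 2 ≤ 1 + x ^ 2 := by
    have h3 : ((m : ℝ) * ν) ^ 2 ≤ |x| ^ 2 := pow_le_pow_left₀ (by positivity) h 2
    rw [sq_abs] at h3
    linarith
  calc 1 / (1 + x ^ 2) ≤ 1 / ((m : ℝ) * ν) ^ 2 := one_div_le_one_div_of_le h1 h2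
    _ = ν⁻¹ ^ 2 * (1 / (m : ℝ) ^ 2) := by
        field_simp

set_option maxHeartbeats 1600000 in
/-- For `ℓ = 0, 1` and every `k ∈ ℤ`, the sum of samples of `g^(ℓ)` over a
`νσ`-separated lattice set `T` is bounded by `2 C_ℓ (1 + π²/(6ν²))`; here
`g^(ℓ)[k - k_m] = g^(ℓ)((k - k_m)/(Nσ)) = g^(ℓ)((k/N - t_m)/σ)` with `t_m = k_m/N`. -/
theorem stmt7 (g : ℝ → ℝ) (C : ℕ → ℝ) (ε β : ℝ)
    (hg : NonnegAdmissibleKernel g C ε β)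
    (N : ℕ) (hN : 0 < N) (σ ν : ℝ) (hσ : 0 < σ) (hν : 0 < ν)
    (T : Set ℝ) (hlat : T ⊆ {t : ℝ | ∃ k : ℤ, t = (k : ℝ) / N})
    (hsep : ∀ s ∈ T, ∀ t ∈ T, s ≠ t → ν * σ ≤ |s - t|)
    (ℓ : ℕ) (hℓ : ℓ ≤ 1) (k : ℤ) :
    |∑' t : T, iteratedDeriv ℓ g (((k : ℝ) / N - (t : ℝ)) / σ)| ≤
      2 * C ℓ * (1 + π ^ 2 / (6 * ν ^ 2)) := by
  obtain ⟨-, -, -, hCpos, hbd, -⟩ := hg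
  have hC : 0 < C ℓ := hCpos ℓ (by omega)
  -- the sampling points in x-space
  set x : T → ℝ := fun t => ((k : ℝ) / N - (t : ℝ)) / σ with hxdef
  set F : T → ℝ := fun t => iteratedDeriv ℓ g (x t) with hFdef
  set B : T → ℝ := fun t => C ℓ / (1 + (x t) ^ 2) with hBdef
  -- the ℕ-indexed comparison sequence and its ℤ-indexed double
  set H : ℕ → ℝ := fun m => ν⁻¹ ^ 2 * (1 / (m : ℝ) ^ 2) + (if m = 0 then (1 : ℝ) else 0)
    with hHdef
  set G : ℤ → ℝ := fun n => Int.rec H H n with hGdef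
  have hHsum : HasSum H (ν⁻¹ ^ 2 * (π ^ 2 / 6) + 1) :=
    (hasSum_zeta_two.mul_left (ν⁻¹ ^ 2)).add (hasSum_ite_eq 0 1)
  have hGsum : HasSum G ((ν⁻¹ ^ 2 * (π ^ 2 / 6) + 1) + (ν⁻¹ ^ 2 * (π ^ 2 / 6) + 1)) :=
    hHsum.int_rec hHsum
  have hHnn : ∀ m : ℕ, 0 ≤ H m := by
    intro m
    have : (0:ℝ) ≤ if m = 0 then (1:ℝ) else 0 := by positivity
    have : (0:ℝ) ≤ ν⁻¹ ^ 2 * (1 / (m : ℝ) ^ 2) := by positivity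
    simp only [hHdef]
    positivity
  have hGnn : ∀ n : ℤ, 0 ≤ G n := by
    intro n
    cases n with
    | ofNat m => exact hHnn m
    | negSucc m => exact hHnn m
  -- the injection into ℤ
  set i : T → ℤ := fun t => ⌊x t / ν⌋ with hidef
  have hxsep : ∀ s t : T, s ≠ t → ν ≤ |x s - x t| := by
    intro s t hst
    have hst' : (s : ℝ) ≠ (t : ℝ) := fun h => hst (Subtype.coe_injective h)
    have h1 : ν * σ ≤ |(s : ℝ) - t| := hsep s s.2 t t.2 hst'
    have h2 : x s - x t = ((t : ℝ) - s) / σ := by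
      simp only [hxdef]
      ring
    rw [h2, abs_div, abs_of_pos hσ, le_div_iff₀ hσ]
    rw [abs_sub_comm] at h1
    linarith
  have hi : Function.Injective i := by
    intro s t h
    by_contra hst
    have h1 : ν ≤ |x s - x t| := hxsep s t hst
    have h2 : |x s / ν - x t / ν| < 1 := Int.abs_sub_lt_one_of_floor_eq_floor h
    rw [div_sub_div_same, abs_div, abs_of_pos hν, div_lt_one hν] at h2
    linarith
  -- pointwise comparison
  have hpt : ∀ t : T, B t ≤ C ℓ * G (i t) := by
    intro t
    have hfl : (⌊x t / ν⌋ : ℝ) ≤ x t / ν := Int.floor_le _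
    have hfl2 : x t / ν < ⌊x t / ν⌋ + 1 := Int.lt_floor_add_one _
    have h1x : (0:ℝ) < 1 + (x t) ^ 2 := by positivity
    have key : 1 / (1 + (x t) ^ 2) ≤ G (i t) := by
      simp only [hidef]
      cases hn : ⌊x t / ν⌋ with
      | ofNat m =>
        show 1 / (1 + (x t) ^ 2) ≤ H m
        rcases Nat.eq_zero_or_pos m with rfl | hm
        · have : 1 / (1 + (x t) ^ 2) ≤ 1 := by
            rw [div_le_one h1x]; nlinarith [sq_nonneg (x t)]
          simpa [hHdef] using this
        · replace hm : 1 ≤ m := hm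
          have hmx : (m : ℝ) * ν ≤ |x t| := by
            rw [hn] at hfl
            have : (m : ℝ) ≤ x t / ν := by exact_mod_cast hfl
            have hx : (m : ℝ) * ν ≤ x t := by
              rw [← le_div_iff₀ hν]; exact this
            exact hx.trans (le_abs_self _)
          have := key_est ν (x t) hν m hm hmx
          calc 1 / (1 + (x t) ^ 2) ≤ ν⁻¹ ^ 2 * (1 / (m : ℝ) ^ 2) := this
            _ ≤ H m := by
                have hm0 : m ≠ 0 := by omega
                simp [hHdef, hm0]
      | negSucc m =>
        show 1 / (1 + (x t) ^ 2) ≤ H m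
        rcases Nat.eq_zero_or_pos m with rfl | hm
        · have : 1 / (1 + (x t) ^ 2) ≤ 1 := by
            rw [div_le_one h1x]; nlinarith [sq_nonneg (x t)]
          simpa [hHdef] using this
        · replace hm : 1 ≤ m := hm
          have hmx : (m : ℝ) * ν ≤ |x t| := by
            rw [hn] at hfl2
            have h3 : x t / ν < -(m : ℝ) := by
              have hc : ((Int.negSucc m : ℤ) : ℝ) = -(m : ℝ) - 1 := by
                rw [Int.negSucc_eq]
                push_cast
                ring
              rw [hc] at hfl2
              linarith
            have hx : x t < -((m : ℝ) * ν) := by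
              have := (div_lt_iff₀ hν).mp h3
              linarith
            have : (m : ℝ) * ν ≤ -(x t) := by linarith
            exact this.trans (neg_le_abs _)
          have := key_est ν (x t) hν m hm hmx
          calc 1 / (1 + (x t) ^ 2) ≤ ν⁻¹ ^ 2 * (1 / (m : ℝ) ^ 2) := this
            _ ≤ H m := by
                have hm0 : m ≠ 0 := by omega
                simp [hHdef, hm0]
    calc B t = C ℓ * (1 / (1 + (x t) ^ 2)) := by rw [hBdef]; ring
      _ ≤ C ℓ * G (i t) := by
          exact mul_le_mul_of_nonneg_left key hC.le
  -- summability
  have hCGsum : Summable (fun n : ℤ => C ℓ * G n) := (hGsum.summable.mul_left _)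
  have hCGcomp : Summable (fun t : T => C ℓ * G (i t)) := hCGsum.comp_injective hi
  have hBnn : ∀ t : T, 0 ≤ B t := by
    intro t
    have : (0:ℝ) < 1 + (x t) ^ 2 := by positivity
    exact div_nonneg hC.le this.le
  have hBsum : Summable B := Summable.of_nonneg_of_le hBnn hpt hCGcomp
  have habs : ∀ t : T, |F t| ≤ B t := fun t => hbd ℓ (by omega) (x t)
  have hFabs : Summable (fun t : T => |F t|) :=
    Summable.of_nonneg_of_le (fun t => abs_nonneg _) habs hBsum
  have hFsum : Summable F := hFabs.of_abs
  have hnorm : Summable (fun t : T => ‖F t‖) := by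
    simpa [Real.norm_eq_abs] using hFabs
  have habs2 := norm_tsum_le_tsum_norm hnorm
  calc |∑' t : T, F t| ≤ ∑' t : T, |F t| := by
        simpa [Real.norm_eq_abs] using habs2
    _ ≤ ∑' t : T, B t := Summable.tsum_le_tsum habs hFabs hBsum
    _ ≤ ∑' n : ℤ, C ℓ * G n := by
        refine Summable.tsum_le_tsum_of_inj i hi (fun c _ => mul_nonneg hC.le (hGnn c)) hpt hBsum hCGsum
    _ = C ℓ * ((ν⁻¹ ^ 2 * (π ^ 2 / 6) + 1) + (ν⁻¹ ^ 2 * (π ^ 2 / 6) + 1)) := by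
        rw [tsum_mul_left, hGsum.tsum_eq]
    _ = 2 * C ℓ * (1 + π ^ 2 / (6 * ν ^ 2)) := by
        field_simp
        ring
end
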